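/- Let x : [0,T] → ℝ^n be a C¹ solution of x'(t) = A x(t) + Σ_{i=1}^m N_i x(t) u_i(t) (no B term) with x(0) = x₀, where u is continuous with ‖u(t)‖₂ ≤ k, and let Q be a symmetric positive semidefinite matrix satisfying (A + (k²/2)I)ᵀ Q + Q (A + (k²/2)I) + Σ_{i=1}^m N_iᵀ Q N_i = −Cᵀ C. Then ∫₀ᵀ ‖C x(t)‖₂² dt ≤ x₀ᵀ Q x₀. -/

import Mathlib

/-!
The storage function `V t = x tᵀ Q x t` dissipates at least the output energy. Young's
inequality for the form of `Q` bounds each cross term `2 uᵢ xᵀ Q Nᵢ x` by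
`uᵢ² xᵀ Q x + (Nᵢ x)ᵀ Q (Nᵢ x)`; since `‖u‖² ≤ k²`, the shift by `k²/2` in the Lyapunov equation
absorbs the first parts, and the equation turns `V'` into at most `-‖C x‖²`.
Integrating over `[0, T]` and dropping `V T ≥ 0` gives the bound.
-/

open Matrix BigOperators MeasureTheory intervalIntegral

section Calculus

variable {ι κ : Type*} [Fintype ι] [Fintype κ] {x y : ℝ → ι → ℝ} {v w : ι → ℝ} {t : ℝ}

theorem HasDerivAt.dotProduct (hx : HasDerivAt x v t) (hy : HasDerivAt y w t) :
    HasDerivAt (fun s => x s ⬝ᵥ y s) (v ⬝ᵥ y t + x t ⬝ᵥ w) t := by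
  simpa [_root_.dotProduct, Finset.sum_add_distrib] using
    HasDerivAt.fun_sum fun i _ => (hasDerivAt_pi.1 hx i).mul (hasDerivAt_pi.1 hy i)

theorem HasDerivAt.matrix_mulVec (M : Matrix κ ι ℝ) (hx : HasDerivAt x v t) :
    HasDerivAt (fun s => M *ᵥ x s) (M *ᵥ v) t := by
  simpa [Function.comp_def] using
    (Matrix.mulVecLin M).toContinuousLinearMap.hasFDerivAt.comp_hasDerivAt t hx

theorem HasDerivAt.dotProduct_mulVec_self {Q : Matrix ι ι ℝ} (hQ : Qᵀ = Q)
    (hx : HasDerivAt x v t) :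
    HasDerivAt (fun s => x s ⬝ᵥ Q *ᵥ x s) (2 * (x t ⬝ᵥ Q *ᵥ v)) t := by
  convert hx.dotProduct (hx.matrix_mulVec Q) using 1
  rw [← dotProduct_transpose_mulVec, hQ]
  ring

end Calculus

section QuadraticForm

variable {ι κ : Type*} [Fintype ι] [Fintype κ]

theorem Matrix.dotProduct_transpose_mul_mul_mulVec {R : Type*} [CommSemiring R]
    (M : Matrix κ ι R) (Q : Matrix κ κ R) (y : ι → R) :
    y ⬝ᵥ (Mᵀ * Q * M) *ᵥ y = (M *ᵥ y) ⬝ᵥ Q *ᵥ (M *ᵥ y) := by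
  rw [← mulVec_mulVec, ← mulVec_mulVec, dotProduct_transpose_mulVec, dotProduct_comm]

theorem Matrix.PosSemidef.two_mul_dotProduct_mulVec_le {Q : Matrix ι ι ℝ} (hQ : Q.PosSemidef)
    (c : ℝ) (y z : ι → ℝ) :
    2 * c * (y ⬝ᵥ Q *ᵥ z) ≤ c ^ 2 * (y ⬝ᵥ Q *ᵥ y) + z ⬝ᵥ Q *ᵥ z := by
  have hsymm : y ⬝ᵥ Q *ᵥ z = z ⬝ᵥ Q *ᵥ y := by
    rw [← dotProduct_transpose_mulVec, (isHermitian_iff_isSymm.1 hQ.isHermitian).eq]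
  have := hQ.dotProduct_mulVec_nonneg (c • y - z)
  simp only [star_trivial, sub_dotProduct, dotProduct_sub, mulVec_sub, mulVec_smul,
    smul_dotProduct, dotProduct_smul, smul_eq_mul, hsymm] at this
  rw [hsymm]
  linarith

end QuadraticForm

section Dissipation

variable {ι σ κ : Type*} [Fintype ι] [DecidableEq ι] [Fintype σ] [Fintype κ]

theorem sum_sq_mulVec_le_of_lyapunov {k : ℝ} {A Q : Matrix ι ι ℝ} {N : σ → Matrix ι ι ℝ}
    {C : Matrix κ ι ℝ} (hQ : Q.PosSemidef)
    (hLyap : (A + (k ^ 2 / 2) • (1 : Matrix ι ι ℝ))ᵀ * Q +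
        Q * (A + (k ^ 2 / 2) • (1 : Matrix ι ι ℝ)) + ∑ i, (N i)ᵀ * Q * N i = -(Cᵀ * C))
    {w : σ → ℝ} (hw : ∑ i, w i ^ 2 ≤ k ^ 2) (y : ι → ℝ) :
    ∑ j, (C *ᵥ y) j ^ 2 ≤ -(2 * (y ⬝ᵥ Q *ᵥ (A *ᵥ y + ∑ i, w i • (N i *ᵥ y)))) := by
  set q : (ι → ℝ) → ℝ := fun z => z ⬝ᵥ Q *ᵥ z
  have hsymm : Qᵀ = Q := (isHermitian_iff_isSymm.1 hQ.isHermitian).eq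
  have hLyap_y : 2 * (y ⬝ᵥ Q *ᵥ (A *ᵥ y)) + k ^ 2 * q y + ∑ i, q (N i *ᵥ y)
      = -∑ j, (C *ᵥ y) j ^ 2 := by
    have := congrArg (fun M => y ⬝ᵥ M *ᵥ y) hLyap
    simp only [add_mulVec, dotProduct_add, sum_mulVec, dotProduct_sum,
      dotProduct_transpose_mul_mul_mulVec, neg_mulVec, dotProduct_neg] at this
    rw [← mulVec_mulVec, ← mulVec_mulVec, ← mulVec_mulVec, dotProduct_transpose_mulVec,
      dotProduct_transpose_mulVec, dotProduct_comm, ← dotProduct_transpose_mulVec, hsymm] at this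
    simp only [add_mulVec, smul_mulVec, one_mulVec, mulVec_add, mulVec_smul, dotProduct_add,
      dotProduct_smul, smul_eq_mul] at this
    simp only [q, _root_.dotProduct, sq] at this ⊢
    linarith
  have hcross : ∑ i, 2 * w i * (y ⬝ᵥ Q *ᵥ (N i *ᵥ y)) ≤ k ^ 2 * q y + ∑ i, q (N i *ᵥ y) :=
    calc ∑ i, 2 * w i * (y ⬝ᵥ Q *ᵥ (N i *ᵥ y))
        ≤ ∑ i, (w i ^ 2 * q y + q (N i *ᵥ y)) :=
          Finset.sum_le_sum fun i _ => hQ.two_mul_dotProduct_mulVec_le (w i) y (N i *ᵥ y)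
      _ ≤ k ^ 2 * q y + ∑ i, q (N i *ᵥ y) := by
          rw [Finset.sum_add_distrib, ← Finset.sum_mul]
          gcongr
          exact hQ.dotProduct_mulVec_nonneg y
  simp only [mulVec_add, mulVec_sum, mulVec_smul, dotProduct_add, dotProduct_sum, dotProduct_smul,
    smul_eq_mul, mul_add, Finset.mul_sum, ← mul_assoc]
  linarith

end Dissipation

theorem stmt_4_general {n m p : ℕ} (T k : ℝ) (hT : 0 < T)
    (A : Matrix (Fin n) (Fin n) ℝ)
    (N : Fin m → Matrix (Fin n) (Fin n) ℝ)
    (C : Matrix (Fin p) (Fin n) ℝ)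
    (Q : Matrix (Fin n) (Fin n) ℝ) (hQ : Q.PosSemidef)
    (hLyap : (A + (k ^ 2 / 2) • (1 : Matrix (Fin n) (Fin n) ℝ))ᵀ * Q +
        Q * (A + (k ^ 2 / 2) • (1 : Matrix (Fin n) (Fin n) ℝ)) +
        ∑ i, (N i)ᵀ * Q * N i = -(Cᵀ * C))
    (u : ℝ → Fin m → ℝ)
    (hubd : ∀ t ∈ Set.Icc (0 : ℝ) T, Real.sqrt (∑ i, (u t i) ^ 2) ≤ k)
    (x₀ : Fin n → ℝ) (x : ℝ → Fin n → ℝ)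
    (hx0 : x 0 = x₀)
    (hx : ∀ t ∈ Set.Icc (0 : ℝ) T,
      HasDerivAt x (A *ᵥ x t + ∑ i, u t i • (N i *ᵥ x t)) t) :
    (∫ t in (0 : ℝ)..T, ∑ j, ((C *ᵥ x t) j) ^ 2) ≤ x₀ ⬝ᵥ Q *ᵥ x₀ := by
  set V : ℝ → ℝ := fun t => x t ⬝ᵥ Q *ᵥ x t
  have hsymm : Qᵀ = Q := (isHermitian_iff_isSymm.1 hQ.isHermitian).eq
  have hV : ∀ t ∈ Set.Icc 0 T, HasDerivAt V
      (2 * (x t ⬝ᵥ Q *ᵥ (A *ᵥ x t + ∑ i, u t i • (N i *ᵥ x t)))) t :=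
    fun t ht => (hx t ht).dotProduct_mulVec_self hsymm
  have hxc : ContinuousOn x (Set.Icc 0 T) := fun t ht => (hx t ht).continuousAt.continuousWithinAt
  have hVc : ContinuousOn V (Set.Icc 0 T) := fun t ht => (hV t ht).continuousAt.continuousWithinAt
  have hgc : ContinuousOn (fun t => ∑ j, ((C *ᵥ x t) j) ^ 2) (Set.Icc 0 T) := by fun_prop
  calc (∫ t in (0 : ℝ)..T, ∑ j, ((C *ᵥ x t) j) ^ 2) ≤ -V T - -V 0 :=
        integral_le_sub_of_hasDeriv_right_of_le hT.le hVc.neg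
          (fun t ht => (hV t (Set.Ioo_subset_Icc_self ht)).neg.hasDerivWithinAt)
          hgc.integrableOn_Icc
          fun t ht => sum_sq_mulVec_le_of_lyapunov hQ hLyap
            (Real.sqrt_le_iff.1 (hubd t (Set.Ioo_subset_Icc_self ht))).2 (x t)
    _ ≤ x₀ ⬝ᵥ Q *ᵥ x₀ := by
        have := hQ.dotProduct_mulVec_nonneg (x T)
        simp only [V, hx0, star_trivial] at this ⊢
        linarith

theorem stmt_4 {n m p : ℕ} (T k : ℝ) (hT : 0 < T) (hk : 0 < k)
    (A : Matrix (Fin n) (Fin n) ℝ)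
    (N : Fin m → Matrix (Fin n) (Fin n) ℝ)
    (C : Matrix (Fin p) (Fin n) ℝ)
    (Q : Matrix (Fin n) (Fin n) ℝ) (hQ : Q.PosSemidef)
    (hLyap : (A + (k ^ 2 / 2) • (1 : Matrix (Fin n) (Fin n) ℝ))ᵀ * Q +
        Q * (A + (k ^ 2 / 2) • (1 : Matrix (Fin n) (Fin n) ℝ)) +
        ∑ i, (N i)ᵀ * Q * N i = -(Cᵀ * C))
    (u : ℝ → Fin m → ℝ) (hu : Continuous u)
    (hubd : ∀ t ∈ Set.Icc (0 : ℝ) T, Real.sqrt (∑ i, (u t i) ^ 2) ≤ k)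
    (x₀ : Fin n → ℝ) (x : ℝ → Fin n → ℝ)
    (hx0 : x 0 = x₀)
    (hx : ∀ t ∈ Set.Icc (0 : ℝ) T,
      HasDerivAt x (A *ᵥ x t + ∑ i, u t i • (N i *ᵥ x t)) t) :
    (∫ t in (0 : ℝ)..T, ∑ j, ((C *ᵥ x t) j) ^ 2) ≤ x₀ ⬝ᵥ Q *ᵥ x₀ :=
  stmt_4_general T k hT A N C Q hQ hLyap u hubd x₀ x hx0 hx
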